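/- Suppose Assumption A1 holds and the UV-decomposition is used. Let U' := {w ∈ ℝⁿ : df(x̄)(−w) = −df(x̄)(w)}, where df(x̄) is the subderivative of f at x̄. Then: (i) for every g° ∈ ε-ri ∂f(x̄), the set {w ∈ ℝⁿ : ⟨g − g°, w⟩ = 0 for all g ∈ ∂f(x̄)} equals the normal cone N_{∂f(x̄)}(g°) of the convex set ∂f(x̄) at g°, and N_{∂f(x̄)}(g°₁) = N_{∂f(x̄)}(g°₂) for any g°₁, g°₂ ∈ ε-ri ∂f(x̄); (ii) U = U' = N_{∂f(x̄)}(g°). -/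

import Mathlib

/-!
Every `g ∈ ∂f(xb)` gives a quadratic minorant of `f` near `xb`, hence `⟪g, w⟫ ≤ df(xb)(w)`.
For the reverse inequality on `U = Vᗮ`, suppose `df(xb)(w) > ⟪g₀, w⟫`. The proximal points `y_t`
minimizing `f z - ⟪g₀, z - xb⟫ + ‖z - xb - t w‖² / (2κt)` carry Fréchet subgradients whose
cluster points lie in `∂f(xb) ⊆ g₀ + V`, so `y_t - xb - t w` is small in the `U`-direction; it
is small in the `V`-direction because `g₀ + B_V(0, ε) ⊆ ∂f(xb)` makes `f` grow sharply along `V`.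
Hence `y_t ≈ xb + t w`, where the assumed growth of `f` contradicts minimality of `y_t`.
So `df(xb) = ⟪g₀, ·⟫` on `U`, and `df(xb)` is odd exactly on `U`; the normal-cone statements are
convex analysis: `g₀` is a relative interior point of `∂f(xb)` and `∂f(xb) - g₀` spans `V`.
-/

open Set Filter Topology
open scoped RealInnerProductSpace

noncomputable section

variable {F : Type*} [NormedAddCommGroup F] [InnerProductSpace ℝ F]

/-- The Fréchet (regular) normal cone to a set `C` at `x`. -/
def frechetNormalCone (C : Set F) (x : F) : Set F :=
  {v | ∀ δ > (0:ℝ), ∃ r > (0:ℝ), ∀ x' ∈ C, ‖x' - x‖ < r → ⟪v, x' - x⟫ ≤ δ * ‖x' - x‖}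

/-- The limiting (Mordukhovich) normal cone to a set `C` at `x`. -/
def limitingNormalCone (C : Set F) (x : F) : Set F :=
  {v | ∃ xs : ℕ → F, ∃ vs : ℕ → F, (∀ k, xs k ∈ C) ∧ Tendsto xs atTop (𝓝 x) ∧
    (∀ k, vs k ∈ frechetNormalCone C (xs k)) ∧ Tendsto vs atTop (𝓝 v)}

/-- `C` is locally closed at `x`. -/
def LocallyClosedAt (C : Set F) (x : F) : Prop := ∃ U ∈ 𝓝 x, IsClosed (C ∩ U)

/-- Prox-regularity of the set `C` at `xb` for the normal vector `wb`,
with respect to `ε` and `ρ`. -/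
def ProxRegularSetAt (C : Set F) (xb wb : F) (ε ρ : ℝ) : Prop :=
  0 < ε ∧ 0 ≤ ρ ∧ LocallyClosedAt C xb ∧ xb ∈ C ∧ wb ∈ limitingNormalCone C xb ∧
    ∀ x w : F, ‖x - xb‖ < ε → w ∈ limitingNormalCone C x → ‖w - wb‖ < ε →
      ∀ x' ∈ C, ‖x' - xb‖ ≤ ε → ⟪w, x' - x⟫ ≤ ρ / 2 * ‖x' - x‖ ^ 2

/-- Clarke regularity of a set at a point: the set is locally closed there and every
limiting normal is a Fréchet (regular) normal. -/
def ClarkeRegularSetAt (C : Set F) (x : F) : Prop :=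
  LocallyClosedAt C x ∧ limitingNormalCone C x ⊆ frechetNormalCone C x

/-- The Fréchet subdifferential of `f : F → ℝ ∪ {±∞}` at `x`. -/
def frechetSubdiff (f : F → EReal) (x : F) : Set F :=
  {v | ∃ a : ℝ, f x = (a : EReal) ∧ ∀ δ > (0:ℝ), ∃ r > (0:ℝ), ∀ x' : F, ‖x' - x‖ < r →
    ((a + ⟪v, x' - x⟫ - δ * ‖x' - x‖ : ℝ) : EReal) ≤ f x'}

/-- The limiting subdifferential of `f` at `x` (with `f`-attentive convergence). -/
def limSubdiff (f : F → EReal) (x : F) : Set F :=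
  {v | ∃ xs : ℕ → F, ∃ vs : ℕ → F, Tendsto xs atTop (𝓝 x) ∧
    Tendsto (fun k => f (xs k)) atTop (𝓝 (f x)) ∧
    (∀ k, vs k ∈ frechetSubdiff f (xs k)) ∧ Tendsto vs atTop (𝓝 v)}

/-- The epigraph of `f`, viewed inside the `L²`-product `F ×₂ ℝ`. -/
def epiSet (f : F → EReal) : Set (WithLp 2 (F × ℝ)) :=
  {p | f (WithLp.equiv 2 (F × ℝ) p).1 ≤ ((WithLp.equiv 2 (F × ℝ) p).2 : EReal)}

/-- Prox-regularity of the function `f` at `xb` for the subgradient `vb`, with respect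
to `ε` and `ρ`. -/
def ProxRegularFnAt (f : F → EReal) (xb vb : F) (ε ρ : ℝ) : Prop :=
  0 < ε ∧ 0 ≤ ρ ∧ vb ∈ limSubdiff f xb ∧
  ∃ a : ℝ, f xb = (a : EReal) ∧ (∃ U ∈ 𝓝 xb, ∀ x ∈ U, LowerSemicontinuousAt f x) ∧
    ∀ (x x' v : F) (b : ℝ), f x = (b : EReal) → |b - a| < ε → ‖x - xb‖ < ε →
      v ∈ limSubdiff f x → ‖v - vb‖ < ε → ‖x' - xb‖ ≤ ε →
      ((b + ⟪v, x' - x⟫ - ρ / 2 * ‖x' - x‖ ^ 2 : ℝ) : EReal) ≤ f x'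

/-- `f` is properly prox-regular at `xb` w.r.t. `ε`, `ρ`: it is prox-regular there for every
limiting subgradient, and its epigraph is prox-regular at `(xb, f xb)` for every normal of
the form `(g, -1)`. -/
def ProperlyProxRegularAt (f : F → EReal) (xb : F) (ε ρ : ℝ) : Prop :=
  (∀ g ∈ limSubdiff f xb, ProxRegularFnAt f xb g ε ρ) ∧
  ∃ a : ℝ, f xb = (a : EReal) ∧
    ∀ g : F, (WithLp.equiv 2 (F × ℝ)).symm (g, -1) ∈
        limitingNormalCone (epiSet f) ((WithLp.equiv 2 (F × ℝ)).symm (xb, a)) →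
      ProxRegularSetAt (epiSet f) ((WithLp.equiv 2 (F × ℝ)).symm (xb, a))
        ((WithLp.equiv 2 (F × ℝ)).symm (g, -1)) ε ρ

/-- Assumption A1: `f` is proper, lower semicontinuous on the whole space, and properly
prox-regular at `xb` with respect to `eb` and `ρ`. -/
def AssumptionA1 (f : F → EReal) (xb : F) (eb ρ : ℝ) : Prop :=
  (∀ x, f x ≠ ⊥) ∧ (∃ x, f x ≠ ⊤) ∧ LowerSemicontinuous f ∧ ProperlyProxRegularAt f xb eb ρ

/-- `D_ε f`: the set of `g` such that `g + int B_V(0, ε) ⊆ ∂f(xb)`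
(the `ε`-relative interior of `∂f(xb)` when the UV-decomposition is used). -/
def DEps (f : F → EReal) (xb : F) (V : Submodule ℝ F) (ε : ℝ) : Set F :=
  {g | ∀ w ∈ V, ‖w‖ < ε → g + w ∈ limSubdiff f xb}

/-- Orthogonal projection onto a submodule, as a map into the ambient space. -/
def projV (V : Submodule ℝ F) [V.HasOrthogonalProjection] (x : F) : F :=
  (V.orthogonalProjectionOnto x : F)

/-- The U-Lagrangian `L_ε(u; gb_v)`. -/
def ULagrangian (f : F → EReal) (xb gb : F) (V : Submodule ℝ F) [V.HasOrthogonalProjection]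
    (ε : ℝ) (u : ↥(Vᗮ)) : EReal :=
  sInf ((fun v : F => f (xb + ↑u + v) - ((⟪projV V gb, v⟫ : ℝ) : EReal)) ''
    {v : F | v ∈ V ∧ ‖v‖ ≤ ε})

/-- The set `W(u; gb_v)` of minimizers defining the U-Lagrangian (with the convention
that the argmin is empty when the infimum is `+∞`). -/
def Wset (f : F → EReal) (xb gb : F) (V : Submodule ℝ F) [V.HasOrthogonalProjection]
    (ε : ℝ) (u : ↥(Vᗮ)) : Set ↥V :=
  {v : ↥V | ‖(v : F)‖ ≤ ε ∧
    f (xb + ↑u + ↑v) - ((⟪projV V gb, (v:F)⟫ : ℝ) : EReal) = ULagrangian f xb gb V ε u ∧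
    ULagrangian f xb gb V ε u ≠ ⊤}

/-- The function `h(u,v) = f(xb+u+v) - ⟪gb_v, v⟫ + δ_{B_V(0,ε)}(v)` on `U ×₂ V`. -/
def hFun (f : F → EReal) (xb gb : F) (V : Submodule ℝ F) [V.HasOrthogonalProjection] (ε : ℝ)
    (p : WithLp 2 (↥(Vᗮ) × ↥V)) : EReal :=
  f (xb + ↑(WithLp.equiv 2 (↥(Vᗮ) × ↥V) p).1 + ↑(WithLp.equiv 2 (↥(Vᗮ) × ↥V) p).2)
    - ((⟪projV V gb, ((WithLp.equiv 2 (↥(Vᗮ) × ↥V) p).2 : F)⟫ : ℝ) : EReal)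
    + (if ‖((WithLp.equiv 2 (↥(Vᗮ) × ↥V) p).2 : F)‖ ≤ ε then (0 : EReal) else ⊤)

/-- `g` is a proximal subgradient of `φ` at `xb`. -/
def IsProximalSubgradient (φ : F → EReal) (xb g : F) : Prop :=
  ∃ a : ℝ, φ xb = (a : EReal) ∧ ∃ ε > (0:ℝ), ∃ ρ > (0:ℝ), ∀ x : F, ‖x - xb‖ ≤ ε →
    ((a + ⟪g, x - xb⟫ - ρ / 2 * ‖x - xb‖ ^ 2 : ℝ) : EReal) ≤ φ x

/-- The localized tilted argmin mapping used in the definition of tilt stability. -/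
def tiltArgmin (φ : F → EReal) (xb : F) (a δ : ℝ) (g : F) : Set F :=
  {x | ‖x - xb‖ ≤ δ ∧ ∀ y : F, ‖y - xb‖ ≤ δ →
    φ x - ((a + ⟪g, x - xb⟫ : ℝ) : EReal) ≤ φ y - ((a + ⟪g, y - xb⟫ : ℝ) : EReal)}

/-- `xb` gives a tilt-stable local minimum of `φ`. -/
def TiltStableLocalMin (φ : F → EReal) (xb : F) : Prop :=
  ∃ a : ℝ, φ xb = (a : EReal) ∧ ∃ δ > (0:ℝ), ∃ M : F → F, ∃ η > (0:ℝ), ∃ L : ℝ,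
    M 0 = xb ∧ (∀ g g' : F, ‖g‖ < η → ‖g'‖ < η → ‖M g - M g'‖ ≤ L * ‖g - g'‖) ∧
    ∀ g : F, ‖g‖ < η → tiltArgmin φ xb a δ g = {M g}

/-- Strict differentiability (with gradient vector `A`) of an extended-real-valued
function at `xb`. -/
def StrictDiffAt (φ : F → EReal) (xb A : F) : Prop :=
  (∃ a : ℝ, φ xb = (a : EReal)) ∧ ∀ δ > (0:ℝ), ∃ r > (0:ℝ), ∀ x x' : F,
    ‖x - xb‖ < r → ‖x' - xb‖ < r →
    ∃ a b : ℝ, φ x = (a : EReal) ∧ φ x' = (b : EReal) ∧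
      |b - a - ⟪A, x' - x⟫| ≤ δ * ‖x' - x‖

/-- `φ` is subdifferentially continuous at `xb` (for every subgradient there). -/
def SubdiffContinuousAt (φ : F → EReal) (xb : F) : Prop :=
  ∀ vb ∈ limSubdiff φ xb, ∀ xs : ℕ → F, ∀ vs : ℕ → F, Tendsto xs atTop (𝓝 xb) →
    (∀ k, vs k ∈ limSubdiff φ (xs k)) → Tendsto vs atTop (𝓝 vb) →
    Tendsto (fun k => φ (xs k)) atTop (𝓝 (φ xb))

/-- Strong metric regularity of the subdifferential map `∂φ` at `(xb, yb)`: the inverse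
admits a Lipschitz single-valued localization around `(yb, xb)`. -/
def StronglyMetricallyRegularSubdiffAt (φ : F → EReal) (xb yb : F) : Prop :=
  yb ∈ limSubdiff φ xb ∧ ∃ a > (0:ℝ), ∃ b > (0:ℝ), ∃ L : ℝ, ∃ s : F → F,
    (∀ g g' : F, ‖g - yb‖ < a → ‖g' - yb‖ < a → ‖s g - s g'‖ ≤ L * ‖g - g'‖) ∧
    ∀ g : F, ‖g - yb‖ < a → ‖s g - xb‖ < b ∧
      ∀ x : F, ‖x - xb‖ < b → (g ∈ limSubdiff φ x ↔ x = s g)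

/-- `f` is subdifferentially regular at `x`: `f x` is finite and the epigraph is Clarke
regular at `(x, f x)`. -/
def SubdiffRegularAt (f : F → EReal) (x : F) : Prop :=
  ∃ a : ℝ, f x = (a : EReal) ∧
    ClarkeRegularSetAt (epiSet f) ((WithLp.equiv 2 (F × ℝ)).symm (x, a))

/-- `M` is (around `yb`) a `C^k`-smooth manifold: locally the common zero set of finitely
many `C^k` functions with linearly independent gradients at `yb`. -/
def IsManifoldAround [CompleteSpace F] (M : Set F) (yb : F) (k : WithTop ℕ∞) : Prop :=
  ∃ m : ℕ, ∃ Q : Set F, ∃ φ : Fin m → F → ℝ, IsOpen Q ∧ yb ∈ Q ∧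
    (∀ i, ContDiff ℝ k (φ i)) ∧ (M ∩ Q = {y ∈ Q | ∀ i, φ i y = 0}) ∧
    LinearIndependent ℝ fun i => gradient (φ i) yb

/-- Continuity (inner- and outer-semicontinuity) of `∂f` at `xb` relative to `M`. -/
def SubdiffContinuousRelAt (f : F → EReal) (M : Set F) (xb : F) : Prop :=
  (∀ g ∈ limSubdiff f xb, ∀ xs : ℕ → F, (∀ k, xs k ∈ M) → Tendsto xs atTop (𝓝 xb) →
      ∃ gs : ℕ → F, (∀ k, gs k ∈ limSubdiff f (xs k)) ∧ Tendsto gs atTop (𝓝 g)) ∧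
  (∀ g : F, ∀ xs : ℕ → F, ∀ gs : ℕ → F, (∀ k, xs k ∈ M) → Tendsto xs atTop (𝓝 xb) →
      (∀ k, gs k ∈ limSubdiff f (xs k)) → Tendsto gs atTop (𝓝 g) → g ∈ limSubdiff f xb)

/-- `f` is `C^k`-partly smooth at `xb` relative to `M`, with `V`-space `V`. -/
def PartlySmoothAt [CompleteSpace F] (f : F → EReal) (xb : F) (M : Set F)
    (V : Submodule ℝ F) (k : WithTop ℕ∞) : Prop :=
  IsManifoldAround M xb k ∧ xb ∈ M ∧
  (∃ N : Set F, IsOpen N ∧ xb ∈ N ∧ ∃ g : F → ℝ, ContDiff ℝ k g ∧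
      ∀ y ∈ M ∩ N, f y = ((g y : ℝ) : EReal)) ∧
  (∃ δ > (0:ℝ), ∀ y ∈ M, ‖y - xb‖ < δ → SubdiffRegularAt f y ∧ (limSubdiff f y).Nonempty) ∧
  limitingNormalCone M xb = (V : Set F) ∧
  SubdiffContinuousRelAt f M xb

/-- The subderivative `df(xb)(w)`. -/
def subderiv (f : F → EReal) (xb : F) (w : F) : EReal :=
  liminf (fun p : ℝ × F => (((p.1)⁻¹ : ℝ) : EReal) * (f (xb + p.1 • p.2) - f xb))
    ((𝓝[>] (0:ℝ)) ×ˢ 𝓝 w)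

/-- The normal cone to a convex set `C` at `x` in the sense of convex analysis. -/
def convexNormalCone (C : Set F) (x : F) : Set F :=
  {w | ∀ y ∈ C, ⟪w, y - x⟫ ≤ 0}


theorem coe_le_inv_mul_sub_iff {a t c : ℝ} (ht : 0 < t) {y : EReal} :
    (c : EReal) ≤ ((t⁻¹ : ℝ) : EReal) * (y - a) ↔ ((a + t * c : ℝ) : EReal) ≤ y := by
  induction y using EReal.rec with
  | bot =>
    rw [EReal.bot_sub, EReal.coe_mul_bot_of_pos (inv_pos.2 ht)]
    exact iff_of_false (by simp) (by simp only [le_bot_iff, EReal.coe_ne_bot, not_false_eq_true])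
  | top => simp [EReal.coe_mul_top_of_pos (inv_pos.2 ht)]
  | coe b =>
    rw [← EReal.coe_sub, ← EReal.coe_mul, EReal.coe_le_coe_iff, EReal.coe_le_coe_iff,
      le_inv_mul_iff₀ ht]
    constructor <;> intro h <;> linarith

theorem norm_le_three_mul_of_norm_sub_sq_le {E : Type*} [SeminormedAddCommGroup E] {d u : E}
    (h : ‖d - u‖ ^ 2 ≤ ‖u‖ ^ 2 + ‖d‖ ^ 2 / 4) :
    ‖d‖ ≤ 3 * ‖u‖ := by
  have htri := norm_sub_norm_le d u
  by_contra! hlt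
  nlinarith [norm_nonneg u, mul_le_mul htri htri (by linarith [norm_nonneg u]) (norm_nonneg _)]

theorem exists_seq_tendsto_nhdsGT_forall {q : ℝ → Prop} (hq : ∀ᶠ t in 𝓝[>] (0 : ℝ), q t) :
    ∃ ts : ℕ → ℝ, Tendsto ts atTop (𝓝[>] 0) ∧ ∀ j, 0 < ts j ∧ q (ts j) := by
  obtain ⟨T, hT, hTq⟩ := mem_nhdsGT_iff_exists_Ioo_subset.1 hq
  obtain ⟨ts, -, hts_mem, hts⟩ := exists_seq_strictAnti_tendsto' (mem_Ioi.1 hT)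
  exact ⟨ts, tendsto_nhdsWithin_iff.2 ⟨hts, Eventually.of_forall fun j => (hts_mem j).1⟩,
    fun j => ⟨(hts_mem j).1, hTq (hts_mem j)⟩⟩

theorem LowerSemicontinuous.exists_isMinOn_add_coe {X : Type*} [TopologicalSpace X]
    {φ : X → EReal} {ψ : X → ℝ} (hφ : LowerSemicontinuous φ) (hψ : Continuous ψ) {K : Set X}
    (hK : IsCompact K) (hne : K.Nonempty) :
    ∃ y ∈ K, IsMinOn (fun z => φ z + ψ z) K y := by
  have hsum : LowerSemicontinuous fun z => φ z + ψ z :=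
    hφ.add' (continuous_coe_real_ereal.comp hψ).lowerSemicontinuous fun x =>
      EReal.continuousAt_add (Or.inr (EReal.coe_ne_bot _)) (Or.inr (EReal.coe_ne_top _))
  exact (hsum.lowerSemicontinuousOn K).exists_isMinOn hne hK

section NormalCone

variable {S : Set F} {V : Submodule ℝ F} {g₀ gt : F}

theorem mem_orthogonal_span_sub_iff (hgt : gt ∈ S) (hg₀ : g₀ ∈ S) {w : F} :
    w ∈ (Submodule.span ℝ ((fun g => g - gt) '' S))ᗮ ↔ ∀ g ∈ S, ⟪g - g₀, w⟫ = 0 := by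
  rw [← Submodule.span_singleton_le_iff_mem, ← Submodule.IsOrtho, Submodule.isOrtho_comm,
    Submodule.isOrtho_span]
  simp only [mem_image, forall_exists_index, and_imp, forall_apply_eq_imp_iff₂,
    mem_singleton_iff, forall_eq]
  have hsub : ∀ c g g' : F, ⟪g - g', w⟫ = ⟪g - c, w⟫ - ⟪g' - c, w⟫ := fun c g g' => by
    rw [← inner_sub_left, sub_sub_sub_cancel_right]
  refine ⟨fun h g hg => ?_, fun h g hg => ?_⟩
  · rw [hsub gt, h g hg, h g₀ hg₀, sub_zero]
  · rw [hsub g₀, h g hg, h gt hgt, sub_zero]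

theorem inner_eq_zero_of_forall_inner_le_zero {w : F} {ε : ℝ} (hε : 0 < ε)
    (h : ∀ v ∈ V, ‖v‖ < ε → ⟪w, v⟫ ≤ 0) {v : F} (hv : v ∈ V) : ⟪w, v⟫ = 0 := by
  set c := ε / (2 * (‖v‖ + 1))
  have hc : 0 < c := by positivity
  have hcv : ‖c • v‖ < ε := by
    rw [norm_smul, Real.norm_of_nonneg hc.le, div_mul_eq_mul_div, div_lt_iff₀ (by positivity)]
    nlinarith [norm_nonneg v]
  have h₁ := h (c • v) (V.smul_mem c hv) hcv
  have h₂ := h (-(c • v)) (V.neg_mem (V.smul_mem c hv)) (by rwa [norm_neg])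
  rw [inner_neg_right, real_inner_smul_right] at h₂
  rw [real_inner_smul_right] at h₁
  nlinarith

theorem convexNormalCone_eq_orthogonal {ε : ℝ} (hε : 0 < ε)
    (hball : ∀ v ∈ V, ‖v‖ < ε → g₀ + v ∈ S) (hS : ∀ g ∈ S, g - g₀ ∈ V) :
    convexNormalCone S g₀ = (Vᗮ : Set F) := by
  ext w
  refine ⟨fun hw => (Submodule.mem_orthogonal' V w).2 fun v hv => ?_, fun hw g hg => ?_⟩
  · exact inner_eq_zero_of_forall_inner_le_zero hε
      (fun v hv hvε => by simpa using hw _ (hball v hv hvε)) hv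
  · exact (Submodule.inner_left_of_mem_orthogonal (hS g hg) hw).le

theorem sub_mem_span_image_sub {g g' : F} (hg : g ∈ S) (hg' : g' ∈ S) :
    g - g' ∈ Submodule.span ℝ ((fun g => g - gt) '' S) := by
  rw [← sub_sub_sub_cancel_right g g' gt]
  exact Submodule.sub_mem _ (Submodule.subset_span ⟨g, hg, rfl⟩)
    (Submodule.subset_span ⟨g', hg', rfl⟩)

end NormalCone

-- `a` stands for the value `f xb`, so that the minorant is real-valued.
def ProxSubgradientWithin (f : F → EReal) (xb : F) (a r ρ : ℝ) (g : F) : Prop :=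
  ∀ x, ‖x - xb‖ ≤ r → ((a + ⟪g, x - xb⟫ - ρ / 2 * ‖x - xb‖ ^ 2 : ℝ) : EReal) ≤ f x

section ProxSubgradient

variable {f : F → EReal} {xb g g₀ gt : F} {a r ρ ε : ℝ} {V : Submodule ℝ F}

theorem mem_limSubdiff_of_mem_DEps (hε : 0 < ε)
    (hg : g ∈ DEps f xb V ε) : g ∈ limSubdiff f xb := by
  simpa using hg 0 V.zero_mem (by simpa using hε)

theorem ProxRegularFnAt.proxSubgradientWithin (h : ProxRegularFnAt f xb g r ρ)
    (ha : f xb = a) : ProxSubgradientWithin f xb a r ρ g := by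
  obtain ⟨hr, -, hg, a', ha', -, hineq⟩ := h
  obtain rfl : a' = a := by exact_mod_cast ha'.symm.trans ha
  intro x hx
  simpa using hineq xb x g a' ha' (by simpa) (by simpa) hg (by simpa) hx

theorem AssumptionA1.exists_proxSubgradientWithin (h : AssumptionA1 f xb r ρ)
    (hg : g ∈ limSubdiff f xb) :
    ∃ a : ℝ, f xb = a ∧ 0 < r ∧ ∀ g ∈ limSubdiff f xb, ProxSubgradientWithin f xb a r ρ g := by
  obtain ⟨-, -, -, hprox, a, ha, -⟩ := h
  exact ⟨a, ha, (hprox g hg).1, fun g hg => (hprox g hg).proxSubgradientWithin ha⟩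

theorem ProxSubgradientWithin.inner_le_subderiv (h : ProxSubgradientWithin f xb a r ρ g)
    (ha : f xb = a) (hr : 0 < r) (w : F) : (⟪g, w⟫ : EReal) ≤ subderiv f xb w := by
  set q : ℝ × F → ℝ := fun p => ⟪g, p.2⟫ - ρ * p.1 / 2 * ‖p.2‖ ^ 2
  have hle : (𝓝[>] (0 : ℝ)) ×ˢ 𝓝 w ≤ 𝓝 (0, w) := by
    rw [nhds_prod_eq]; exact prod_mono nhdsWithin_le_nhds le_rfl
  have hq : Tendsto (fun p => (q p : EReal)) ((𝓝[>] (0 : ℝ)) ×ˢ 𝓝 w) (𝓝 ⟪g, w⟫) := by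
    have hcont : Continuous q := by fun_prop
    have h0 : q (0, w) = ⟪g, w⟫ := by simp [q]
    exact h0 ▸ (continuous_coe_real_ereal.tendsto _).comp ((hcont.tendsto (0, w)).mono_left hle)
  have hsmall : Tendsto (fun p : ℝ × F => p.1 • p.2) ((𝓝[>] (0 : ℝ)) ×ˢ 𝓝 w) (𝓝 0) := by
    have hcont : Continuous fun p : ℝ × F => p.1 • p.2 := by fun_prop
    simpa using (hcont.tendsto (0, w)).mono_left hle
  have hev : ∀ᶠ p in (𝓝[>] (0 : ℝ)) ×ˢ 𝓝 w,
      (q p : EReal) ≤ (((p.1)⁻¹ : ℝ) : EReal) * (f (xb + p.1 • p.2) - f xb) := by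
    filter_upwards [prod_mem_prod self_mem_nhdsWithin univ_mem,
      hsmall (Metric.closedBall_mem_nhds 0 hr)] with p hp hpr
    rw [ha, coe_le_inv_mul_sub_iff hp.1]
    have := h (xb + p.1 • p.2) (by simpa using hpr)
    convert this using 2
    simp only [q, add_sub_cancel_left, real_inner_smul_right, norm_smul,
      Real.norm_of_nonneg (le_of_lt hp.1)]
    ring
  exact (hq.liminf_eq).symm.le.trans (liminf_le_liminf hev)

theorem mem_frechetSubdiff_of_forall_le {y v : F} {b M δ : ℝ} (hb : f y = b) (hδ : 0 < δ)
    (h : ∀ z, ‖z - y‖ < δ → ((b + ⟪v, z - y⟫ - M * ‖z - y‖ ^ 2 : ℝ) : EReal) ≤ f z) :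
    v ∈ frechetSubdiff f y := by
  refine ⟨b, hb, fun η hη => ⟨min δ (η / (|M| + 1)), lt_min hδ (by positivity), fun z hz => ?_⟩⟩
  refine le_trans ?_ (h z (hz.trans_le (min_le_left _ _)))
  have hzη : ‖z - y‖ * (|M| + 1) < η :=
    (lt_div_iff₀ (by positivity)).1 (hz.trans_le (min_le_right _ _))
  have hM : M * ‖z - y‖ ^ 2 ≤ η * ‖z - y‖ := by
    nlinarith [le_abs_self M, norm_nonneg (z - y), mul_nonneg (norm_nonneg (z - y)) (abs_nonneg M)]
  exact EReal.coe_le_coe_iff.2 (by linarith)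

theorem IsMinOn.mem_frechetSubdiff_of_prox {y u : F} {r s b : ℝ} (hs : 0 < s)
    (hmin : IsMinOn (fun z => f z + ((‖z - xb - u‖ ^ 2 / (2 * s) - ⟪g, z - xb⟫ : ℝ) : EReal))
      (Metric.closedBall xb r) y)
    (hy : ‖y - xb‖ < r) (hb : f y = b) : g + s⁻¹ • (u - (y - xb)) ∈ frechetSubdiff f y := by
  refine mem_frechetSubdiff_of_forall_le (M := 1 / (2 * s)) hb (sub_pos.2 hy) fun z hz => ?_
  have hzr : z ∈ Metric.closedBall xb r := by
    rw [Metric.mem_closedBall, dist_eq_norm]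
    calc ‖z - xb‖ = ‖(z - y) + (y - xb)‖ := by rw [sub_add_sub_cancel]
      _ ≤ ‖z - y‖ + ‖y - xb‖ := norm_add_le _ _
      _ ≤ r := by linarith
  have hcmp := isMinOn_iff.1 hmin z hzr
  induction hfz : f z using EReal.rec with
  | bot =>
    rw [hfz, hb, EReal.bot_add, le_bot_iff, ← EReal.coe_add] at hcmp
    exact absurd hcmp (EReal.coe_ne_bot _)
  | top => exact le_top
  | coe c =>
    rw [hfz, hb, ← EReal.coe_add, ← EReal.coe_add, EReal.coe_le_coe_iff] at hcmp
    refine EReal.coe_le_coe_iff.2 ?_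
    have hinner : ⟪g, z - xb⟫ = ⟪g, y - xb⟫ + ⟪g, z - y⟫ := by
      rw [← inner_add_right, add_comm, sub_add_sub_cancel]
    have hexpand : ‖z - xb - u‖ ^ 2 / (2 * s) = ‖y - xb - u‖ ^ 2 / (2 * s)
        + s⁻¹ * ⟪y - xb - u, z - y⟫ + 1 / (2 * s) * ‖z - y‖ ^ 2 := by
      rw [show z - xb - u = (y - xb - u) + (z - y) by abel, norm_add_sq_real]
      field_simp
    rw [hexpand, hinner] at hcmp
    rw [inner_add_left, real_inner_smul_left, ← neg_sub (y - xb) u, inner_neg_left]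
    linarith

theorem exists_mem_limSubdiff_mapClusterPt [ProperSpace F] {xs vs : ℕ → F}
    (hx : Tendsto xs atTop (𝓝 xb)) (hfx : Tendsto (fun k => f (xs k)) atTop (𝓝 (f xb)))
    (hv : ∀ k, vs k ∈ frechetSubdiff f (xs k)) (hbdd : Bornology.IsBounded (range vs)) :
    ∃ g ∈ limSubdiff f xb, MapClusterPt g atTop vs := by
  obtain ⟨g, -, φ, hφ, hlim⟩ :=
    hbdd.isCompact_closure.tendsto_subseq fun k => subset_closure (mem_range_self k)
  exact ⟨g, ⟨xs ∘ φ, vs ∘ φ, hx.comp hφ.tendsto_atTop, hfx.comp hφ.tendsto_atTop,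
    fun k => hv (φ k), hlim⟩, hlim.mapClusterPt.of_comp hφ.tendsto_atTop⟩

theorem ProxSubgradientWithin.exists_prox_point [ProperSpace F]
    (h : ProxSubgradientWithin f xb a r ρ g) (hf : LowerSemicontinuous f) (ha : f xb = a)
    {s : ℝ} (hs : 0 < s) (hsρ : s * ρ ≤ 1 / 4) {u : F} (hu : 3 * ‖u‖ < r) :
    ∃ y : F, ∃ b : ℝ, f y = b ∧ ‖y - xb‖ ≤ 3 * ‖u‖ ∧ b ≤ a + ⟪g, y - xb⟫ + ‖u‖ ^ 2 / (2 * s) ∧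
      g + s⁻¹ • (u - (y - xb)) ∈ frechetSubdiff f y := by
  set ψ : F → ℝ := fun z => ‖z - xb - u‖ ^ 2 / (2 * s) - ⟪g, z - xb⟫
  have hxb : xb ∈ Metric.closedBall xb r := Metric.mem_closedBall_self (by linarith [norm_nonneg u])
  obtain ⟨y, hyr, hymin⟩ :=
    hf.exists_isMinOn_add_coe (by fun_prop : Continuous ψ) (isCompact_closedBall xb r) ⟨xb, hxb⟩
  rw [Metric.mem_closedBall, dist_eq_norm] at hyr
  have hcmp := isMinOn_iff.1 hymin xb hxb
  obtain ⟨b, hb⟩ : ∃ b : ℝ, f y = b := by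
    have hbot : f y ≠ ⊥ := ne_bot_of_le_ne_bot (EReal.coe_ne_bot _) (h y hyr)
    have htop : f y ≠ ⊤ := by
      intro htop
      simp [htop, ha, ← EReal.coe_add] at hcmp
    exact ⟨(f y).toReal, (EReal.coe_toReal htop hbot).symm⟩
  simp only [ψ, hb, ha, sub_self, zero_sub, norm_neg, inner_zero_right, sub_zero,
    ← EReal.coe_add, EReal.coe_le_coe_iff] at hcmp
  have hlow : a + ⟪g, y - xb⟫ - ρ / 2 * ‖y - xb‖ ^ 2 ≤ b := by exact_mod_cast hb ▸ h y hyr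
  -- comparing `y` with `xb` and using the minorant: `‖y - xb - u‖² ≤ ‖u‖² + s ρ ‖y - xb‖²`
  have hnorm : ‖y - xb‖ ≤ 3 * ‖u‖ := by
    refine norm_le_three_mul_of_norm_sub_sq_le ?_
    have h1 : ‖y - xb - u‖ ^ 2 / (2 * s) ≤ ‖u‖ ^ 2 / (2 * s) + ρ / 2 * ‖y - xb‖ ^ 2 := by linarith
    rw [div_add' _ _ _ (by positivity), div_le_div_iff_of_pos_right (by positivity)] at h1
    nlinarith [sq_nonneg ‖y - xb‖]
  refine ⟨y, b, hb, hnorm, ?_, hymin.mem_frechetSubdiff_of_prox hs (hnorm.trans_lt hu) hb⟩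
  have : 0 ≤ ‖y - xb - u‖ ^ 2 / (2 * s) := by positivity
  linarith

theorem ProxSubgradientWithin.tendsto_of_le_add_mul {w : F} {β : ℝ}
    (hg₀ : ProxSubgradientWithin f xb a r ρ g₀) (ha : f xb = a) {ts : ℕ → ℝ}
    (hts : Tendsto ts atTop (𝓝 0)) {y : ℕ → F} {b : ℕ → ℝ} (hb : ∀ j, f (y j) = b j)
    (hdist : ∀ j, ‖y j - xb‖ ≤ 3 * (ts j * ‖w‖)) (hr : ∀ j, 3 * (ts j * ‖w‖) ≤ r)
    (hup : ∀ j, b j ≤ a + ⟪g₀, y j - xb⟫ + β * ts j) :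
    Tendsto y atTop (𝓝 xb) ∧ Tendsto (fun j => f (y j)) atTop (𝓝 (f xb)) := by
  have hd : Tendsto (fun j => y j - xb) atTop (𝓝 0) :=
    squeeze_zero_norm hdist (by simpa using (hts.mul_const ‖w‖).const_mul 3)
  refine ⟨tendsto_sub_nhds_zero_iff.1 hd, ?_⟩
  have hlow : ∀ j, a + ⟪g₀, y j - xb⟫ - ρ / 2 * ‖y j - xb‖ ^ 2 ≤ b j := fun j => by
    have := hg₀ (y j) ((hdist j).trans (hr j))
    rwa [hb, EReal.coe_le_coe_iff] at this
  have hc : Continuous fun d : F => a + ⟪g₀, d⟫ - ρ / 2 * ‖d‖ ^ 2 := by fun_prop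
  simp only [hb, ha]
  refine EReal.tendsto_coe.2 (tendsto_of_tendsto_of_tendsto_of_le_of_le
    ((hc.tendsto' 0 a (by simp)).comp hd) ?_ hlow hup)
  simpa using ((tendsto_const_nhds.inner hd).const_add a).add (hts.const_mul β)

theorem norm_inv_mul_smul_smul_sub_le {κ t : ℝ} (hκ : 0 < κ) (ht : 0 < t) {w d : F}
    (hd : ‖d‖ ≤ 3 * (t * ‖w‖)) : ‖(κ * t)⁻¹ • (t • w - d)‖ ≤ 4 * ‖w‖ / κ := by
  rw [norm_smul, Real.norm_of_nonneg (by positivity), inv_mul_le_iff₀ (by positivity)]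
  calc ‖t • w - d‖ ≤ t * ‖w‖ + 3 * (t * ‖w‖) := by
        refine (norm_sub_le _ _).trans (add_le_add ?_ hd)
        rw [norm_smul, Real.norm_of_nonneg ht.le]
    _ = κ * t * (4 * ‖w‖ / κ) := by field_simp; ring

theorem ProxSubgradientWithin.exists_prox_point_starProjection_orthogonal_lt
    [FiniteDimensional ℝ F] (hg₀ : ProxSubgradientWithin f xb a r ρ g₀)
    (hf : LowerSemicontinuous f) (ha : f xb = a) (hr : 0 < r)
    (hV : ∀ g ∈ limSubdiff f xb, g - g₀ ∈ V) (w : F) {β δ : ℝ} (hβ : 0 < β) (hδ : 0 < δ)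
    {p : ℝ → Prop} (hp : ∀ᶠ t in 𝓝[>] 0, p t) :
    ∃ t > 0, p t ∧ ∃ y : F, ∃ b : ℝ, f y = b ∧ ‖y - xb‖ ≤ 3 * (t * ‖w‖) ∧
      b ≤ a + ⟪g₀, y - xb⟫ + β * t ∧ ‖Vᗮ.starProjection (t • w - (y - xb))‖ < δ * t := by
  set κ := (‖w‖ ^ 2 + 1) / (2 * β)
  have hκ : 0 < κ := by positivity
  have hsmall : ∀ᶠ t in 𝓝[>] (0 : ℝ), κ * t * ρ < 1 / 4 ∧ 3 * (t * ‖w‖) < r := by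
    refine Eventually.filter_mono nhdsWithin_le_nhds (Eventually.and ?_ ?_)
    · have hc : Continuous fun t : ℝ => κ * t * ρ := by fun_prop
      exact (hc.tendsto' 0 0 (by simp)).eventually_lt_const (by norm_num)
    · have hc : Continuous fun t : ℝ => 3 * (t * ‖w‖) := by fun_prop
      exact (hc.tendsto' 0 0 (by simp)).eventually_lt_const hr
  obtain ⟨ts, hts, hts_mem⟩ := exists_seq_tendsto_nhdsGT_forall hsmall
  choose hts_pos hts_small using hts_mem
  have hnorm_tw : ∀ j, ‖ts j • w‖ = ts j * ‖w‖ := fun j => by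
    rw [norm_smul, Real.norm_of_nonneg (hts_pos j).le]
  choose y b hb hdist hup hsub using fun j => hg₀.exists_prox_point hf ha
    (mul_pos hκ (hts_pos j)) (hts_small j).1.le (u := ts j • w)
    (by rw [hnorm_tw]; exact (hts_small j).2)
  simp only [hnorm_tw] at hdist hup
  -- the penalty `‖t w‖² / (2 κ t)` was chosen to be at most `β t`
  have hup' : ∀ j, b j ≤ a + ⟪g₀, y j - xb⟫ + β * ts j := fun j => by
    have hpen : (ts j * ‖w‖) ^ 2 / (2 * (κ * ts j)) ≤ β * ts j := by
      rw [div_le_iff₀ (by have := hts_pos j; positivity)]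
      simp only [κ]
      field_simp
      nlinarith [hts_pos j]
    linarith [hup j]
  obtain ⟨hy, hfy⟩ := hg₀.tendsto_of_le_add_mul ha (hts.mono_right nhdsWithin_le_nhds) hb hdist
    (fun j => (hts_small j).2.le) hup'
  have hbdd :
      Bornology.IsBounded (range fun j => g₀ + (κ * ts j)⁻¹ • (ts j • w - (y j - xb))) :=
    Metric.isBounded_closedBall.subset <| range_subset_iff.2 fun j => by
      rw [Metric.mem_closedBall, dist_eq_norm, add_sub_cancel_left]
      exact norm_inv_mul_smul_smul_sub_le (w := w) hκ (hts_pos j) (hdist j)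
  obtain ⟨g, hg, hclus⟩ := exists_mem_limSubdiff_mapClusterPt hy hfy hsub hbdd
  -- `g - g₀ ∈ V`, so the `Vᗮ`-part of `(t w - (y - xb)) / (κ t)` is frequently small
  have hnear : ∀ᶠ v in 𝓝 g, ‖Vᗮ.starProjection (v - g₀)‖ < δ / κ := by
    have hPg : Vᗮ.starProjection (g - g₀) = 0 :=
      (Vᗮ.starProjection_apply_eq_zero_iff).2 (V.le_orthogonal_orthogonal (hV g hg))
    have hc : Continuous fun v => ‖Vᗮ.starProjection (v - g₀)‖ := by fun_prop
    exact (hc.tendsto' g 0 (by simp [hPg])).eventually_lt_const (by positivity)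
  obtain ⟨j, hj, hpj⟩ := ((hclus.frequently hnear).and_eventually (hts.eventually hp)).exists
  refine ⟨ts j, hts_pos j, hpj, y j, b j, hb j, hdist j, hup' j, ?_⟩
  have hκt : 0 < κ * ts j := mul_pos hκ (hts_pos j)
  rw [add_sub_cancel_left, map_smul, norm_smul, Real.norm_of_nonneg (inv_pos.2 hκt).le,
    inv_mul_lt_iff₀ hκt] at hj
  calc _ < κ * ts j * (δ / κ) := hj
    _ = δ * ts j := by field_simp

theorem add_norm_starProjection_le_of_ball [V.HasOrthogonalProjection] {ε' : ℝ} (hε' : 0 ≤ ε')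
    (hε'ε : ε' < ε)
    (h : ∀ v ∈ V, ‖v‖ < ε → ProxSubgradientWithin f xb a r ρ (g₀ + v)) {x : F}
    (hx : ‖x - xb‖ ≤ r) :
    ((a + ⟪g₀, x - xb⟫ + ε' * ‖V.starProjection (x - xb)‖ - ρ / 2 * ‖x - xb‖ ^ 2 : ℝ) : EReal)
      ≤ f x := by
  set q := V.starProjection (x - xb)
  rcases eq_or_ne q 0 with hq | hq
  · simpa [hq] using h 0 V.zero_mem (by simpa using hε'.trans_lt hε'ε) x hx
  have hqd : ⟪q, x - xb⟫ = ‖q‖ ^ 2 := by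
    have h0 := V.starProjection_inner_eq_zero (x - xb) q (V.starProjection_apply_mem _)
    rw [inner_sub_left, real_inner_self_eq_norm_sq, real_inner_comm] at h0
    linarith
  have hv : ‖(ε' / ‖q‖) • q‖ = ε' := by
    rw [norm_smul, Real.norm_of_nonneg (by positivity), div_mul_cancel₀ _ (norm_ne_zero_iff.2 hq)]
  convert h _ (V.smul_mem _ (V.starProjection_apply_mem _)) (hv.trans_lt hε'ε) x hx using 3
  rw [inner_add_left, real_inner_smul_left, hqd]
  field_simp
  ring

theorem exists_prox_point_near_ray [FiniteDimensional ℝ F] (hf : LowerSemicontinuous f)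
    (ha : f xb = a) (hr : 0 < r) (hprox : ∀ g ∈ limSubdiff f xb, ProxSubgradientWithin f xb a r ρ g)
    (hε : 0 < ε) (hg₀ : g₀ ∈ DEps f xb V ε)
    (hV : ∀ g ∈ limSubdiff f xb, g - g₀ ∈ V) {w : F} (hw : w ∈ Vᗮ) {β δ : ℝ} (hβ : 0 < β)
    (hδ : 0 < δ) (hβδ : β ≤ ε * δ / 16) {p : ℝ → Prop} (hp : ∀ᶠ t in 𝓝[>] 0, p t) :
    ∃ t > 0, p t ∧ ∃ y : F, ∃ b : ℝ, f y = b ∧ ‖y - xb - t • w‖ < δ * t ∧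
      b ≤ a + ⟪g₀, y - xb⟫ + β * t := by
  have hsmall : ∀ᶠ t in 𝓝[>] (0 : ℝ),
      p t ∧ 9 * |ρ| * t * ‖w‖ ^ 2 < ε * δ / 4 ∧ 3 * (t * ‖w‖) < r := by
    refine hp.and (Eventually.filter_mono nhdsWithin_le_nhds (Eventually.and ?_ ?_))
    · have hc : Continuous fun t : ℝ => 9 * |ρ| * t * ‖w‖ ^ 2 := by fun_prop
      exact (hc.tendsto' 0 0 (by simp)).eventually_lt_const (by positivity)
    · have hc : Continuous fun t : ℝ => 3 * (t * ‖w‖) := by fun_prop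
      exact (hc.tendsto' 0 0 (by simp)).eventually_lt_const hr
  have hg₀S := mem_limSubdiff_of_mem_DEps hε hg₀
  obtain ⟨t, ht, ⟨hpt, ht_small, htr⟩, y, b, hb, hdist, hup, hperp⟩ :=
    (hprox g₀ hg₀S).exists_prox_point_starProjection_orthogonal_lt hf ha hr hV w hβ
      (half_pos hδ) hsmall
  refine ⟨t, ht, hpt, y, b, hb, ?_, hup⟩
  -- `f` grows at rate `ε / 2` along `V` beyond its minorant at `g₀`, which `f y` exceeds by `≤ β t`
  have hVd : ‖V.starProjection (y - xb)‖ < δ * t / 2 := by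
    have hgrowV := add_norm_starProjection_le_of_ball (half_pos hε).le (half_lt_self hε)
      (fun v hv hvε => hprox _ (hg₀ v hv hvε)) (hdist.trans htr.le)
    rw [hb, EReal.coe_le_coe_iff] at hgrowV
    have hρd : ρ / 2 * ‖y - xb‖ ^ 2 ≤ t * (ε * δ / 8) :=
      calc ρ / 2 * ‖y - xb‖ ^ 2 ≤ |ρ| / 2 * (3 * (t * ‖w‖)) ^ 2 := by
            gcongr
            exact le_abs_self ρ
          _ = t / 2 * (9 * |ρ| * t * ‖w‖ ^ 2) := by ring
          _ ≤ t * (ε * δ / 8) := by nlinarith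
    nlinarith [mul_pos (mul_pos hε hδ) ht, mul_le_mul_of_nonneg_right hβδ ht.le]
  have hQ : V.starProjection (y - xb - t • w) = V.starProjection (y - xb) := by
    rw [map_sub, map_smul, V.starProjection_apply_eq_zero_iff.2 hw, smul_zero, sub_zero]
  have hP : ‖Vᗮ.starProjection (y - xb - t • w)‖ = ‖Vᗮ.starProjection (t • w - (y - xb))‖ := by
    rw [← norm_neg, ← map_neg, neg_sub]
  calc ‖y - xb - t • w‖
      = ‖V.starProjection (y - xb - t • w) + Vᗮ.starProjection (y - xb - t • w)‖ := by
        rw [V.starProjection_add_starProjection_orthogonal]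
    _ ≤ ‖V.starProjection (y - xb)‖ + ‖Vᗮ.starProjection (t • w - (y - xb))‖ := by
        rw [← hQ, ← hP]; exact norm_add_le _ _
    _ < δ * t := by linarith

theorem exists_forall_le_of_lt_subderiv (ha : f xb = a) {c : ℝ} {w : F}
    (hc : (c : EReal) < subderiv f xb w) :
    ∃ θ > 0, ∀ᶠ t in 𝓝[>] (0 : ℝ), ∀ w', ‖w' - w‖ < θ →
      ((a + t * c : ℝ) : EReal) ≤ f (xb + t • w') := by
  obtain ⟨pt, hpt, pw, hpw, hlt⟩ :=
    eventually_prod_iff.1 (eventually_lt_of_lt_liminf hc (by isBoundedDefault))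
  obtain ⟨θ, hθ, hball⟩ := Metric.eventually_nhds_iff.1 hpw
  refine ⟨θ, hθ, ?_⟩
  filter_upwards [hpt, self_mem_nhdsWithin] with t ht ht₀ w' hw'
  have := (hlt ht (hball (by rwa [dist_eq_norm]))).le
  rwa [ha, coe_le_inv_mul_sub_iff ht₀] at this

theorem subderiv_le_inner_of_mem_orthogonal [FiniteDimensional ℝ F] (hf : LowerSemicontinuous f)
    (ha : f xb = a) (hr : 0 < r) (hprox : ∀ g ∈ limSubdiff f xb, ProxSubgradientWithin f xb a r ρ g)
    (hε : 0 < ε) (hg₀ : g₀ ∈ DEps f xb V ε)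
    (hV : ∀ g ∈ limSubdiff f xb, g - g₀ ∈ V) {w : F} (hw : w ∈ Vᗮ) :
    subderiv f xb w ≤ ⟪g₀, w⟫ := by
  by_contra! hlt
  obtain ⟨c, hc, hc_lt⟩ := EReal.lt_iff_exists_real_btwn.1 hlt
  set η := c - ⟪g₀, w⟫ with hη_def
  have hη : 0 < η := sub_pos.2 (by exact_mod_cast hc)
  obtain ⟨θ, hθ, hgrowth⟩ := exists_forall_le_of_lt_subderiv ha hc_lt
  set θ₀ := min θ (η / (2 * (‖g₀‖ + 1)))
  have hθ₀ : 0 < θ₀ := lt_min hθ (by positivity)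
  have hg₀θ₀ : ‖g₀‖ * θ₀ < η / 2 :=
    calc ‖g₀‖ * θ₀ ≤ ‖g₀‖ * (η / (2 * (‖g₀‖ + 1))) :=
          mul_le_mul_of_nonneg_left (min_le_right _ _) (norm_nonneg _)
      _ < η / 2 := by
          rw [← mul_div_assoc, div_lt_iff₀ (by positivity)]
          nlinarith [norm_nonneg g₀]
  obtain ⟨t, ht, hgrow_t, y, b, hb, hclose, hup⟩ := exists_prox_point_near_ray hf ha hr hprox hε
    hg₀ hV hw (β := min (ε * θ₀ / 16) (η / 4)) (lt_min (by positivity) (by positivity)) hθ₀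
    (min_le_left _ _) hgrowth
  have hgrow : a + t * c ≤ b := by
    have hnear : ‖t⁻¹ • (y - xb) - w‖ < θ := by
      rw [← inv_smul_smul₀ ht.ne' w, ← smul_sub, norm_smul,
        Real.norm_of_nonneg (inv_nonneg.2 ht.le), inv_mul_lt_iff₀ ht]
      nlinarith [min_le_left θ (η / (2 * (‖g₀‖ + 1)))]
    have := hgrow_t (t⁻¹ • (y - xb)) hnear
    rwa [smul_inv_smul₀ ht.ne', add_sub_cancel, hb, EReal.coe_le_coe_iff] at this
  have hinner : ⟪g₀, y - xb⟫ ≤ t * ⟪g₀, w⟫ + ‖g₀‖ * θ₀ * t :=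
    calc ⟪g₀, y - xb⟫ = ⟪g₀, t • w + (y - xb - t • w)⟫ := by rw [add_sub_cancel]
      _ = t * ⟪g₀, w⟫ + ⟪g₀, y - xb - t • w⟫ := by rw [inner_add_right, real_inner_smul_right]
      _ ≤ t * ⟪g₀, w⟫ + ‖g₀‖ * ‖y - xb - t • w‖ := by
          gcongr; exact real_inner_le_norm _ _
      _ ≤ t * ⟪g₀, w⟫ + ‖g₀‖ * θ₀ * t := by
          rw [mul_assoc]; gcongr
  have htc : t * c = t * η + t * ⟪g₀, w⟫ := by rw [hη_def]; ring
  nlinarith [mul_le_mul_of_nonneg_right (min_le_right (ε * θ₀ / 16) (η / 4)) ht.le,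
    mul_lt_mul_of_pos_right hg₀θ₀ ht, mul_pos ht hη]

theorem ProxSubgradientWithin.subderiv_eq_inner_of_neg
    (h : ProxSubgradientWithin f xb a r ρ g) (ha : f xb = a) (hr : 0 < r) {w : F}
    (hw : subderiv f xb (-w) = -subderiv f xb w) : subderiv f xb w = ⟪g, w⟫ := by
  refine le_antisymm ?_ (h.inner_le_subderiv ha hr w)
  have hneg := h.inner_le_subderiv ha hr (-w)
  rw [hw, inner_neg_right, EReal.coe_neg] at hneg
  exact EReal.neg_le_neg_iff.1 hneg

theorem subderiv_eq_inner_of_mem_orthogonal [FiniteDimensional ℝ F]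
    (hf : LowerSemicontinuous f) (ha : f xb = a) (hr : 0 < r)
    (hprox : ∀ g ∈ limSubdiff f xb, ProxSubgradientWithin f xb a r ρ g) (hε : 0 < ε)
    (hg₀ : g₀ ∈ DEps f xb V ε) (hV : ∀ g ∈ limSubdiff f xb, g - g₀ ∈ V) {w : F} (hw : w ∈ Vᗮ) :
    subderiv f xb w = ⟪g₀, w⟫ :=
  le_antisymm (subderiv_le_inner_of_mem_orthogonal hf ha hr hprox hε hg₀ hV hw)
    ((hprox g₀ (mem_limSubdiff_of_mem_DEps hε hg₀)).inner_le_subderiv ha hr w)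

theorem subderiv_neg_eq_neg_iff_mem_orthogonal [FiniteDimensional ℝ F]
    (hf : LowerSemicontinuous f) (ha : f xb = a) (hr : 0 < r)
    (hprox : ∀ g ∈ limSubdiff f xb, ProxSubgradientWithin f xb a r ρ g) (hε : 0 < ε)
    (hgt : gt ∈ limSubdiff f xb)
    (hg₀ : g₀ ∈ DEps f xb (Submodule.span ℝ ((fun g => g - gt) '' limSubdiff f xb)) ε) {w : F} :
    subderiv f xb (-w) = -subderiv f xb w ↔
      w ∈ (Submodule.span ℝ ((fun g => g - gt) '' limSubdiff f xb))ᗮ := by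
  have hg₀S := mem_limSubdiff_of_mem_DEps hε hg₀
  constructor
  · intro hw
    refine (mem_orthogonal_span_sub_iff hgt hg₀S).2 fun g hg => ?_
    rw [inner_sub_left, sub_eq_zero, ← EReal.coe_eq_coe_iff,
      ← (hprox g hg).subderiv_eq_inner_of_neg ha hr hw,
      (hprox g₀ hg₀S).subderiv_eq_inner_of_neg ha hr hw]
  · intro hw
    have hV g (hg : g ∈ limSubdiff f xb) := sub_mem_span_image_sub (gt := gt) hg hg₀S
    rw [subderiv_eq_inner_of_mem_orthogonal hf ha hr hprox hε hg₀ hV hw,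
      subderiv_eq_inner_of_mem_orthogonal hf ha hr hprox hε hg₀ hV (neg_mem hw),
      inner_neg_right, EReal.coe_neg]

end ProxSubgradient

theorem U_space_characterization_general {n : ℕ} (f : EuclideanSpace ℝ (Fin n) → EReal) (xb : EuclideanSpace ℝ (Fin n)) (eb ρ ε : ℝ) (hε : 0 < ε)
    (hA1 : AssumptionA1 f xb eb ρ) (gt : EuclideanSpace ℝ (Fin n)) (hgt : gt ∈ limSubdiff f xb)
    (V : Submodule ℝ (EuclideanSpace ℝ (Fin n)))
    (hV : V = Submodule.span ℝ ((fun g => g - gt) '' limSubdiff f xb)) :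
    (∀ g₀ ∈ DEps f xb V ε,
      {w : EuclideanSpace ℝ (Fin n) | ∀ g ∈ limSubdiff f xb, ⟪g - g₀, w⟫ = 0} =
        convexNormalCone (limSubdiff f xb) g₀) ∧
    (∀ g₁ ∈ DEps f xb V ε, ∀ g₂ ∈ DEps f xb V ε,
      convexNormalCone (limSubdiff f xb) g₁ = convexNormalCone (limSubdiff f xb) g₂) ∧
    (∀ g₀ ∈ DEps f xb V ε,
      ((Vᗮ : Set (EuclideanSpace ℝ (Fin n))) = {w : EuclideanSpace ℝ (Fin n) | subderiv f xb (-w) = - subderiv f xb w} ∧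
       (Vᗮ : Set (EuclideanSpace ℝ (Fin n))) = convexNormalCone (limSubdiff f xb) g₀)) := by
  obtain ⟨a, ha, heb, hprox⟩ := hA1.exists_proxSubgradientWithin hgt
  obtain ⟨-, -, hf, -⟩ := hA1
  have hmem : ∀ g₀ ∈ DEps f xb V ε, g₀ ∈ limSubdiff f xb := fun _ => mem_limSubdiff_of_mem_DEps hε
  have hcone : ∀ g₀ ∈ DEps f xb V ε, convexNormalCone (limSubdiff f xb) g₀ = Vᗮ :=
    fun g₀ hg₀ => convexNormalCone_eq_orthogonal hε hg₀ fun g hg =>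
      hV ▸ sub_mem_span_image_sub hg (hmem g₀ hg₀)
  refine ⟨fun g₀ hg₀ => ?_, fun g₁ h₁ g₂ h₂ => (hcone g₁ h₁).trans (hcone g₂ h₂).symm,
    fun g₀ hg₀ => ⟨?_, (hcone g₀ hg₀).symm⟩⟩
  · ext w
    rw [hcone g₀ hg₀, hV]
    exact (mem_orthogonal_span_sub_iff hgt (hmem g₀ hg₀)).symm
  · subst hV
    ext w
    exact (subderiv_neg_eq_neg_iff_mem_orthogonal hf ha heb hprox hε hgt hg₀).symm

/-- With the UV-decomposition, under Assumption A1: for every `g₀` in the `ε`-relative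
interior of `∂f(xb)`, the set of `w` orthogonal to `∂f(xb) - g₀` is the normal cone to the
convex set `∂f(xb)` at `g₀`; these normal cones coincide for any two such `g₀`; and
`U = U' = N_[∂f(xb)](g₀)`, where `U'` is the set of `w` with `df(xb)(-w) = -df(xb)(w)`. -/
theorem U_space_characterization {n : ℕ} (f : EuclideanSpace ℝ (Fin n) → EReal) (xb : EuclideanSpace ℝ (Fin n)) (eb ρ ε : ℝ) (hε : 0 < ε)
    (hA1 : AssumptionA1 f xb eb ρ) (gt : EuclideanSpace ℝ (Fin n)) (hgt : gt ∈ limSubdiff f xb)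
    (V : Submodule ℝ (EuclideanSpace ℝ (Fin n)))
    (hV : V = Submodule.span ℝ ((fun g => g - gt) '' limSubdiff f xb))
    (hne : (DEps f xb V ε).Nonempty) :
    (∀ g₀ ∈ DEps f xb V ε,
      {w : EuclideanSpace ℝ (Fin n) | ∀ g ∈ limSubdiff f xb, ⟪g - g₀, w⟫ = 0} =
        convexNormalCone (limSubdiff f xb) g₀) ∧
    (∀ g₁ ∈ DEps f xb V ε, ∀ g₂ ∈ DEps f xb V ε,
      convexNormalCone (limSubdiff f xb) g₁ = convexNormalCone (limSubdiff f xb) g₂) ∧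
    (∀ g₀ ∈ DEps f xb V ε,
      ((Vᗮ : Set (EuclideanSpace ℝ (Fin n))) = {w : EuclideanSpace ℝ (Fin n) | subderiv f xb (-w) = - subderiv f xb w} ∧
       (Vᗮ : Set (EuclideanSpace ℝ (Fin n))) = convexNormalCone (limSubdiff f xb) g₀)) :=
  U_space_characterization_general f xb eb ρ ε hε hA1 gt hgt V hV

end
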